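/- arXiv:1310.1105 — 5 statements merged into one kernel-verified Lean document; each statement's English description precedes it below -/
import Mathlib

section
/- (Le Cam) If X_1,...,X_L are independent Bernoulli random variables with parameters p_1,...,p_L and W = Σ X_i, λ = Σ p_i, then the total variation-type sum Σ_{k=0}^∞ |P[W = k] - e^{-λ} λ^k / k!| is at most 2 Σ_{i=1}^L p_i². -/
/-!
Encode a law on `ℕ` by its generating function in `ℝ⟦X⟧`: independent sums become products,
and the `ℓ¹` distance of two laws becomes the `ℓ¹` norm of the coefficients of the difference of
their generating functions, which is submultiplicative. The Poisson-binomial law has generating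
function `∏ (1 - pᵢ + pᵢ X)`, and the Poisson one `e^{-λ} e^{λX}` satisfies
`Po(q + λ) = Po(q) Po(λ)`. Adding one Bernoulli factor `B`,
`B W - Po(q) Po(λ) = B (W - Po(λ)) + (B - Po(q)) Po(λ)`, and since `‖B‖₁ = ‖Po(λ)‖₁ = 1` the
error grows by at most `‖B - Po(q)‖₁ = 2q(1 - e^{-q}) ≤ 2q²`.
-/

open Finset PowerSeries

/-- The pmf of a Poisson-binomial random variable `W = ∑ X_i`, a sum of
independent Bernoulli(`p i`) variables: `P[W = k]` is the sum over all subsets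
of size `k` of the product of successes times the product of failures. -/
def poissonBinomialPMF (L : ℕ) (p : Fin L → ℝ) (k : ℕ) : ℝ :=
  ∑ S ∈ Finset.univ.powerset.filter (fun S : Finset (Fin L) => S.card = k),
    (∏ i ∈ S, p i) * ∏ i ∈ Sᶜ, (1 - p i)

namespace PowerSeries

/-- The `ℓ¹` norm of the coefficient sequence (`0` when it is not absolutely summable). -/
noncomputable def l1Norm (f : ℝ⟦X⟧) : ℝ := ∑' n, |coeff n f|

variable {f g : ℝ⟦X⟧}

theorem summable_abs_coeff_one : Summable fun n => |coeff n (1 : ℝ⟦X⟧)| :=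
  summable_of_ne_finset_zero (s := {0}) fun n hn => by simp_all [coeff_one]

theorem summable_abs_coeff_mul (hf : Summable fun n => |coeff n f|)
    (hg : Summable fun n => |coeff n g|) : Summable fun n => |coeff n (f * g)| := by
  refine (summable_norm_sum_mul_antidiagonal_of_summable_norm
    (f := fun n => coeff n f) (g := fun n => coeff n g) hf hg).congr fun n => ?_
  rw [coeff_mul, Real.norm_eq_abs]

theorem summable_abs_coeff_prod {ι : Type*} {s : Finset ι} {f : ι → ℝ⟦X⟧}
    (hf : ∀ i ∈ s, Summable fun n => |coeff n (f i)|) :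
    Summable fun n => |coeff n (∏ i ∈ s, f i)| :=
  prod_induction f (fun φ => Summable fun n => |coeff n φ|)
    (fun _ _ => summable_abs_coeff_mul) summable_abs_coeff_one hf

theorem summable_abs_coeff_sub (hf : Summable fun n => |coeff n f|)
    (hg : Summable fun n => |coeff n g|) : Summable fun n => |coeff n (f - g)| := by
  simpa using (hf.of_abs.sub hg.of_abs).abs

theorem l1Norm_add_le (hf : Summable fun n => |coeff n f|)
    (hg : Summable fun n => |coeff n g|) : l1Norm (f + g) ≤ l1Norm f + l1Norm g := by
  have hle : ∀ n, |coeff n (f + g)| ≤ |coeff n f| + |coeff n g| := fun n => by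
    simpa using abs_add_le (coeff n f) (coeff n g)
  rw [l1Norm, l1Norm, l1Norm, ← hf.tsum_add hg]
  exact ((hf.add hg).of_nonneg_of_le (fun _ => abs_nonneg _) hle).tsum_le_tsum hle (hf.add hg)

theorem l1Norm_mul_le (hf : Summable fun n => |coeff n f|)
    (hg : Summable fun n => |coeff n g|) : l1Norm (f * g) ≤ l1Norm f * l1Norm g := by
  have hle : ∀ n, |coeff n (f * g)| ≤ ∑ kl ∈ antidiagonal n, |coeff kl.1 f| * |coeff kl.2 g| :=
    fun n => by
      rw [coeff_mul]
      exact (abs_sum_le_sum_abs _ _).trans_eq (by simp_rw [abs_mul])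
  rw [l1Norm, l1Norm, l1Norm, tsum_mul_tsum_eq_tsum_sum_antidiagonal_of_summable_norm
    (by simpa using hf) (by simpa using hg)]
  refine (summable_abs_coeff_mul hf hg).tsum_le_tsum hle ?_
  exact (summable_norm_sum_mul_antidiagonal_of_summable_norm
    (f := fun n => |coeff n f|) (g := fun n => |coeff n g|) (by simpa using hf)
    (by simpa using hg)).of_norm

end PowerSeries

noncomputable def bernoulliPGF (q : ℝ) : ℝ⟦X⟧ := C (1 - q) + C q * X

noncomputable def poissonPGF (a : ℝ) : ℝ⟦X⟧ := C (Real.exp (-a)) * rescale a (exp ℝ)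

theorem coeff_bernoulliPGF (q : ℝ) (n : ℕ) :
    coeff n (bernoulliPGF q) = if n = 0 then 1 - q else if n = 1 then q else 0 := by
  rcases n with _ | _ | n <;> simp [bernoulliPGF]

theorem coeff_poissonPGF (a : ℝ) (n : ℕ) :
    coeff n (poissonPGF a) = Real.exp (-a) * a ^ n / n.factorial := by
  simp [poissonPGF]
  ring

theorem poissonPGF_add (a b : ℝ) : poissonPGF (a + b) = poissonPGF a * poissonPGF b := by
  rw [poissonPGF, poissonPGF, poissonPGF, ← exp_mul_exp_eq_exp_add, neg_add, Real.exp_add,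
    map_mul]
  ring

theorem summable_abs_coeff_bernoulliPGF (q : ℝ) :
    Summable fun n => |coeff n (bernoulliPGF q)| :=
  summable_of_ne_finset_zero (s := range 2) fun n hn => by
    rw [mem_range] at hn
    rw [coeff_bernoulliPGF, if_neg (by omega), if_neg (by omega), abs_zero]

theorem l1Norm_bernoulliPGF {q : ℝ} (hq : q ∈ Set.Icc (0 : ℝ) 1) :
    l1Norm (bernoulliPGF q) = 1 := by
  rw [l1Norm, tsum_eq_sum (s := range 2) fun n hn => by
    rw [mem_range] at hn
    rw [coeff_bernoulliPGF, if_neg (by omega), if_neg (by omega), abs_zero]]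
  simp [sum_range_succ, coeff_bernoulliPGF, abs_of_nonneg hq.1, abs_of_nonneg (sub_nonneg.2 hq.2)]

theorem hasSum_coeff_poissonPGF (a : ℝ) : HasSum (fun n => coeff n (poissonPGF a)) 1 := by
  have := (NormedSpace.expSeries_div_hasSum_exp a).mul_left (Real.exp (-a))
  rw [← Real.exp_eq_exp_ℝ, ← Real.exp_add, neg_add_cancel, Real.exp_zero] at this
  simpa [coeff_poissonPGF, mul_div_assoc] using this

theorem coeff_poissonPGF_nonneg {a : ℝ} (ha : 0 ≤ a) (n : ℕ) : 0 ≤ coeff n (poissonPGF a) := by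
  rw [coeff_poissonPGF]
  positivity

theorem summable_abs_coeff_poissonPGF (a : ℝ) : Summable fun n => |coeff n (poissonPGF a)| :=
  (hasSum_coeff_poissonPGF a).summable.abs

theorem l1Norm_poissonPGF {a : ℝ} (ha : 0 ≤ a) : l1Norm (poissonPGF a) = 1 := by
  simp_rw [l1Norm, abs_of_nonneg (coeff_poissonPGF_nonneg ha _)]
  exact (hasSum_coeff_poissonPGF a).tsum_eq

theorem l1Norm_bernoulliPGF_sub_poissonPGF_le {q : ℝ} (hq : 0 ≤ q) :
    l1Norm (bernoulliPGF q - poissonPGF q) ≤ 2 * q ^ 2 := by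
  have hexp : 1 - q ≤ Real.exp (-q) := by linarith [Real.add_one_le_exp (-q)]
  have hP0 : coeff 0 (poissonPGF q) = Real.exp (-q) := by simp [coeff_poissonPGF]
  have hP1 : coeff 1 (poissonPGF q) = Real.exp (-q) * q := by simp [coeff_poissonPGF]
  have htail : ∑' n, coeff (n + 2) (poissonPGF q) = 1 - Real.exp (-q) - Real.exp (-q) * q := by
    have := (hasSum_coeff_poissonPGF q).summable.sum_add_tsum_nat_add 2
    rw [(hasSum_coeff_poissonPGF q).tsum_eq, sum_range_succ, sum_range_one, hP0, hP1] at this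
    linarith
  have hd0 : |coeff 0 (bernoulliPGF q - poissonPGF q)| = Real.exp (-q) - (1 - q) := by
    rw [map_sub, hP0, coeff_bernoulliPGF, if_pos rfl, abs_of_nonpos (by linarith)]
    ring
  have hd1 : |coeff 1 (bernoulliPGF q - poissonPGF q)| = q * (1 - Real.exp (-q)) := by
    have hexp_le_one : Real.exp (-q) ≤ 1 := Real.exp_le_one_iff.mpr (neg_nonpos.mpr hq)
    rw [map_sub, hP1, coeff_bernoulliPGF, if_neg one_ne_zero, if_pos rfl,
      abs_of_nonneg (by nlinarith)]
    ring
  have hd : ∀ n, |coeff (n + 2) (bernoulliPGF q - poissonPGF q)| =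
      coeff (n + 2) (poissonPGF q) := fun n => by
    rw [map_sub, coeff_bernoulliPGF, if_neg (by omega), if_neg (by omega), zero_sub, abs_neg,
      abs_of_nonneg (coeff_poissonPGF_nonneg hq _)]
  rw [l1Norm, ← (summable_abs_coeff_sub (summable_abs_coeff_bernoulliPGF q)
    (summable_abs_coeff_poissonPGF q)).sum_add_tsum_nat_add 2, tsum_congr hd, htail,
    sum_range_succ, sum_range_one, hd0, hd1]
  nlinarith

theorem coeff_prod_bernoulliPGF {ι : Type*} [DecidableEq ι] (s : Finset ι) (p : ι → ℝ) (k : ℕ) :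
    coeff k (∏ i ∈ s, bernoulliPGF (p i)) =
      ∑ S ∈ s.powerset with S.card = k, (∏ i ∈ S, p i) * ∏ i ∈ s \ S, (1 - p i) := by
  simp_rw [bernoulliPGF, add_comm (C _), prod_add, prod_mul_distrib, prod_const, ← map_prod,
    mul_right_comm _ (X ^ _), ← map_mul, map_sum, coeff_C_mul_X_pow, sum_filter, eq_comm]

theorem l1Norm_prod_bernoulliPGF_sub_poissonPGF_le {ι : Type*} {s : Finset ι} {p : ι → ℝ}
    (hp : ∀ i ∈ s, p i ∈ Set.Icc (0 : ℝ) 1) :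
    l1Norm (∏ i ∈ s, bernoulliPGF (p i) - poissonPGF (∑ i ∈ s, p i)) ≤ 2 * ∑ i ∈ s, p i ^ 2 := by
  classical
  induction s using Finset.induction_on with
  | empty => simp [l1Norm, poissonPGF]
  | insert a s ha ih =>
    rw [forall_mem_insert] at hp
    set B := bernoulliPGF (p a)
    set W := ∏ i ∈ s, bernoulliPGF (p i)
    set lam := ∑ i ∈ s, p i
    have hB := summable_abs_coeff_bernoulliPGF (p a)
    have hW : Summable fun n => |coeff n W| :=
      summable_abs_coeff_prod fun i _ => summable_abs_coeff_bernoulliPGF (p i)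
    have hPq := summable_abs_coeff_poissonPGF (p a)
    have hPlam := summable_abs_coeff_poissonPGF lam
    have hsplit : ∏ i ∈ insert a s, bernoulliPGF (p i) - poissonPGF (∑ i ∈ insert a s, p i) =
        B * (W - poissonPGF lam) + (B - poissonPGF (p a)) * poissonPGF lam := by
      rw [prod_insert ha, sum_insert ha, poissonPGF_add]
      ring
    calc l1Norm (∏ i ∈ insert a s, bernoulliPGF (p i) - poissonPGF (∑ i ∈ insert a s, p i))
        ≤ l1Norm B * l1Norm (W - poissonPGF lam)
          + l1Norm (B - poissonPGF (p a)) * l1Norm (poissonPGF lam) := by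
          rw [hsplit]
          refine (l1Norm_add_le (summable_abs_coeff_mul hB (summable_abs_coeff_sub hW hPlam))
            (summable_abs_coeff_mul (summable_abs_coeff_sub hB hPq) hPlam)).trans ?_
          exact add_le_add (l1Norm_mul_le hB (summable_abs_coeff_sub hW hPlam))
            (l1Norm_mul_le (summable_abs_coeff_sub hB hPq) hPlam)
      _ ≤ 2 * ∑ i ∈ s, p i ^ 2 + 2 * p a ^ 2 := by
          rw [l1Norm_bernoulliPGF hp.1, l1Norm_poissonPGF (sum_nonneg fun i hi => (hp.2 i hi).1),
            one_mul, mul_one]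
          exact add_le_add (ih hp.2) (l1Norm_bernoulliPGF_sub_poissonPGF_le hp.1.1)
      _ = 2 * ∑ i ∈ insert a s, p i ^ 2 := by
          rw [sum_insert ha]
          ring

/-- Le Cam's theorem: the ℓ¹ distance between the Poisson-binomial pmf with
parameters `p_1,…,p_L` and the Poisson pmf with mean `λ = ∑ p_i` is at most
`2 ∑ p_i²`. -/
theorem le_cam (L : ℕ) (p : Fin L → ℝ) (hp : ∀ i, p i ∈ Set.Icc (0 : ℝ) 1)
    (lam : ℝ) (hlam : ∑ i, p i = lam) :
    ∑' k : ℕ, |poissonBinomialPMF L p k - Real.exp (-lam) * lam ^ k / (Nat.factorial k)|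
      ≤ 2 * ∑ i, (p i) ^ 2 := by
  have hcoeff : ∀ k, poissonBinomialPMF L p k - Real.exp (-lam) * lam ^ k / k.factorial =
      coeff k (∏ i, bernoulliPGF (p i) - poissonPGF lam) := fun k => by
    simp only [poissonBinomialPMF, map_sub, coeff_prod_bernoulliPGF, coeff_poissonPGF,
      compl_eq_univ_sdiff]
  simp_rw [hcoeff, ← hlam]
  exact l1Norm_prod_bernoulliPGF_sub_poissonPGF_le fun i _ => hp i
end

section
/- For a binomially distributed number of users N ~ Bin(L, p) with λ = Lp, exponential channel gains, and P_e(ρx) = α e^{-ηρx}, the average BER across fading and user distribution equals α p^{-1-ηρ} λ β(p, 1+ηρ, λ/p), where β(x,a,b) = ∫_0^x y^{a-1}(1-y)^{b-1} dy is the incomplete Beta function. -/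
open MeasureTheory

/-- Average BER for a binomial number of users `N ~ Bin(L,p)` with `λ = Lp`,
exponential channel gains and `P_e(ρx) = α e^{-ηρx}`:
`E[P̄_e] = α p^{-1-ηρ} λ β(p, 1+ηρ, λ/p)` where `β` is the incomplete Beta
function. The density of the best selected gain is
`λ e^{-x}(1 - p e^{-x})^{λ/p - 1}`. -/
theorem avg_ber_binomial (α η ρ p lam : ℝ) (hα : 0 < α) (hη : 0 < η)
    (hρ : 0 < ρ) (hp : 0 < p) (hp1 : p ≤ 1) (hlam : 0 < lam) :
    ∫ x in Set.Ioi (0 : ℝ),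
        α * Real.exp (-η * ρ * x) *
          (lam * Real.exp (-x) * (1 - p * Real.exp (-x)) ^ (lam / p - 1))
      = α * p ^ (-(1 + η * ρ)) * lam *
          ∫ y in (0 : ℝ)..p, y ^ ((1 + η * ρ) - 1) * (1 - y) ^ (lam / p - 1) := by
  set g : ℝ → ℝ := fun x => p * Real.exp (-x) with hg
  set f : ℝ → ℝ := fun y => y ^ (η * ρ) * (1 - y) ^ (lam / p - 1) with hf
  -- image of Ioi 0 under g is Ioo 0 p
  have himg : g '' Set.Ioi (0 : ℝ) = Set.Ioo 0 p := by
    ext y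
    constructor
    · rintro ⟨x, hx, rfl⟩
      simp only [Set.mem_Ioi] at hx
      constructor
      · positivity
      · have : Real.exp (-x) < 1 := by
          rw [Real.exp_lt_one_iff]; linarith
        calc p * Real.exp (-x) < p * 1 := by nlinarith [Real.exp_pos (-x)]
          _ = p := by ring
    · rintro ⟨hy0, hyp⟩
      refine ⟨Real.log (p / y), ?_, ?_⟩
      · simp only [Set.mem_Ioi]
        apply Real.log_pos
        rw [lt_div_iff₀ hy0]; linarith
      · simp only [hg]
        rw [← Real.log_inv, Real.exp_log (by positivity)]
        field_simp
  have hderiv : ∀ x ∈ Set.Ioi (0 : ℝ),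
      HasDerivWithinAt g (-(p * Real.exp (-x))) (Set.Ioi 0) x := by
    intro x _
    have : HasDerivAt g (p * (Real.exp (-x) * -1)) x := by
      exact (Real.hasDerivAt_exp (-x)).comp x (hasDerivAt_neg x) |>.const_mul p
    simpa [mul_comm, mul_assoc] using this.hasDerivWithinAt
  have hinj : Set.InjOn g (Set.Ioi 0) := by
    intro a _ b _ hab
    simp only [hg] at hab
    have := mul_left_cancel₀ (ne_of_gt hp) hab
    exact neg_injective (Real.exp_injective this)
  have key := integral_image_eq_integral_abs_deriv_smul (measurableSet_Ioi)
      hderiv hinj f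
  rw [himg] at key
  have hRHS : ∫ y in (0 : ℝ)..p, y ^ ((1 + η * ρ) - 1) * (1 - y) ^ (lam / p - 1)
      = ∫ y in Set.Ioo (0:ℝ) p, f y := by
    rw [intervalIntegral.integral_of_le hp.le, integral_Ioc_eq_integral_Ioo]
    congr 1
    ext y
    simp [hf, add_sub_cancel_left]
  rw [hRHS, key]
  rw [← integral_const_mul]
  refine setIntegral_congr_fun measurableSet_Ioi (fun x hx => ?_)
  · simp only [hf, hg, smul_eq_mul]
    have hex : (0:ℝ) < Real.exp (-x) := Real.exp_pos _
    have habs : |(-(p * Real.exp (-x)))| = p * Real.exp (-x) := by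
      rw [abs_neg, abs_of_pos (by positivity)]
    rw [habs]
    have hpe : (p * Real.exp (-x)) ^ (η * ρ) = p ^ (η * ρ) * Real.exp (-x) ^ (η * ρ) :=
      Real.mul_rpow hp.le hex.le
    rw [hpe]
    have hexp : Real.exp (-x) ^ (η * ρ) = Real.exp (-η * ρ * x) := by
      rw [← Real.exp_mul]; ring_nf
    rw [hexp]
    have hpow : p ^ (-(1 + η * ρ)) * (p * p ^ (η * ρ)) = 1 := by
      have h1 : p * p ^ (η * ρ) = p ^ (1 + η * ρ) := by
        rw [Real.rpow_add hp, Real.rpow_one]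
      rw [h1, Real.rpow_neg hp.le]
      exact inv_mul_cancel₀ (ne_of_gt (Real.rpow_pos_of_pos hp _))
    linear_combination -(α * lam * Real.exp (-η * ρ * x) * Real.exp (-x) *
      (1 - p * Real.exp (-x)) ^ (lam / p - 1)) * hpow
end

section
/- For a negative binomially distributed number of users with CDF of the selected gain F*(x) = (1 + u e^{-x})^{-r}, exponential fading, and P_e(ρx) = α e^{-ηρx}, the average BER equals (r u α / (1 + ηρ)) · ₂F₁(1+r, 1+ηρ; 2+ηρ; -u). -/
open MeasureTheory

/-- Gauss's hypergeometric function `₂F₁(a,b;c;z)` defined via the Euler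
integral representation (valid for `c > b > 0`). -/
noncomputable def hypGeom2F1 (a b c z : ℝ) : ℝ :=
  (Real.Gamma c / (Real.Gamma b * Real.Gamma (c - b))) *
    ∫ t in (0 : ℝ)..1, t ^ (b - 1) * (1 - t) ^ (c - b - 1) * (1 + (-z) * t) ^ (-a)

/-- Average BER for a negative-binomial number of users: with selected-gain
density `r u e^{-x}(1 + u e^{-x})^{-1-r}` and `P_e(ρx) = α e^{-ηρx}`,
`E[P̄_e] = (ruα/(1+ηρ)) ₂F₁(1+r, 1+ηρ; 2+ηρ; -u)`. -/
theorem avg_ber_negative_binomial (α η ρ u r : ℝ) (hα : 0 < α) (hη : 0 < η)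
    (hρ : 0 < ρ) (hu : 0 < u) (hr : 0 < r) :
    ∫ x in Set.Ioi (0 : ℝ),
        α * Real.exp (-η * ρ * x) *
          (r * u * Real.exp (-x) * (1 + u * Real.exp (-x)) ^ (-(1 + r)))
      = (r * u * α / (1 + η * ρ)) * hypGeom2F1 (1 + r) (1 + η * ρ) (2 + η * ρ) (-u) := by
  have hηρ : (0:ℝ) < 1 + η * ρ := by positivity
  set g : ℝ → ℝ := fun y => α * y ^ (η*ρ) * (r * u * (1 + u*y) ^ (-(1+r))) with hg
  have himg : (fun x : ℝ => Real.exp (-x)) '' Set.Ioi 0 = Set.Ioo 0 1 := by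
    ext y
    simp only [Set.mem_image, Set.mem_Ioi, Set.mem_Ioo]
    constructor
    · rintro ⟨x, hx, rfl⟩
      refine ⟨Real.exp_pos _, ?_⟩
      rw [Real.exp_lt_one_iff]; linarith
    · rintro ⟨h0, h1⟩
      exact ⟨-Real.log y, by simpa using Real.log_neg h0 h1,
        by rw [neg_neg, Real.exp_log h0]⟩
  have hderiv : ∀ x ∈ Set.Ioi (0:ℝ),
      HasDerivWithinAt (fun x => Real.exp (-x)) (-Real.exp (-x)) (Set.Ioi 0) x := by
    intro x _
    have h : HasDerivAt (fun x : ℝ => Real.exp (-x)) (Real.exp (-x) * (-1)) x :=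
      (Real.hasDerivAt_exp (-x)).comp x (hasDerivAt_neg x)
    simpa using h.hasDerivWithinAt
  have hinj : Set.InjOn (fun x : ℝ => Real.exp (-x)) (Set.Ioi 0) := by
    intro a _ b _ h
    exact neg_injective (Real.exp_injective h)
  have hsub := MeasureTheory.integral_image_eq_integral_abs_deriv_smul
    measurableSet_Ioi hderiv hinj g
  rw [himg] at hsub
  have hLeq : (∫ x in Set.Ioi (0:ℝ),
        α * Real.exp (-η * ρ * x) *
          (r * u * Real.exp (-x) * (1 + u * Real.exp (-x)) ^ (-(1 + r))))
      = ∫ y in Set.Ioo (0:ℝ) 1, g y := by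
    rw [hsub]
    refine MeasureTheory.setIntegral_congr_fun measurableSet_Ioi (fun x _ => ?_)
    simp only [hg, smul_eq_mul, abs_neg, abs_of_pos (Real.exp_pos _)]
    rw [show (Real.exp (-x)) ^ (η*ρ) = Real.exp ((-x) * (η*ρ)) by rw [Real.exp_mul]]
    rw [show -η * ρ * x = (-x) * (η*ρ) by ring]
    ring
  have hIoo : ∫ y in Set.Ioo (0:ℝ) 1, g y
      = (α*r*u) * ∫ y in Set.Ioo (0:ℝ) 1, y ^ (η*ρ) * (1+u*y) ^ (-(1+r)) := by
    rw [← MeasureTheory.integral_const_mul]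
    congr 1
    funext y
    simp only [hg]
    ring
  have hΓ : Real.Gamma (2+η*ρ) / (Real.Gamma (1+η*ρ) * Real.Gamma ((2+η*ρ) - (1+η*ρ))) = 1 + η*ρ := by
    have h1 : (2+η*ρ) - (1+η*ρ) = (1:ℝ) := by ring
    rw [h1, Real.Gamma_one, mul_one, show (2:ℝ)+η*ρ = (1+η*ρ)+1 by ring,
      Real.Gamma_add_one (ne_of_gt hηρ)]
    field_simp
  have hint : (∫ t in (0:ℝ)..1, t ^ ((1+η*ρ)-1) * (1-t) ^ ((2+η*ρ)-(1+η*ρ)-1) * (1 + -(-u)*t) ^ (-(1+r)))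
      = ∫ y in Set.Ioo (0:ℝ) 1, y ^ (η*ρ) * (1+u*y) ^ (-(1+r)) := by
    rw [intervalIntegral.integral_of_le zero_le_one, MeasureTheory.integral_Ioc_eq_integral_Ioo]
    refine MeasureTheory.setIntegral_congr_fun measurableSet_Ioo (fun t ht => ?_)
    rw [show (1+η*ρ)-1 = η*ρ by ring, show (2+η*ρ)-(1+η*ρ)-1 = (0:ℝ) by ring,
      Real.rpow_zero, neg_neg]
    ring
  rw [hLeq, hIoo, hypGeom2F1, hint, hΓ]
  field_simp
end

section
/- The ergodic capacity C̄(ρ, N) = ρ ∫_0^∞ (1 - (1-e^{-x})^N)/(1+ρx) dx is a concave increasing function of N > 0, and hence for any ℕ-valued random variable 𝒩 with mean λ, E[C̄(ρ, 𝒩)] ≤ C̄(ρ, λ) (Jensen's inequality): randomizing the number of users can only reduce ergodic capacity. -/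
open MeasureTheory

/-- The ergodic capacity `C̄(ρ,N) = ρ ∫_0^∞ (1-(1-e^{-x})^N)/(1+ρx) dx` of the
best of `N` users with Rayleigh fading. -/
noncomputable def ergodicCapacity (ρ N : ℝ) : ℝ :=
  ρ * ∫ x in Set.Ioi (0 : ℝ), (1 - (1 - Real.exp (-x)) ^ N) / (1 + ρ * x)

open Set Real

/-!
For each `x > 0`, put `t = 1 - e^{-x} ∈ (0, 1)`. Since `t ^ N = e^{N log t}`, the integrand
`N ↦ (1 - t ^ N) / (1 + ρ x)` is increasing and concave. Bernoulli's inequality for `N ≥ 1`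
and `t ^ N ≥ t` for `N ≤ 1` give `1 - t ^ N ≤ max N 1 * e^{-x}`, so every integrand with
`N ≥ 0` is integrable. Hence `C̄(ρ, ·)` is increasing and concave on `[0, ∞)`. Jensen's
inequality for the law of `𝒩` follows from a supporting line of `C̄(ρ, ·)` at `λ > 0`; if
`λ = 0`, the law is the point mass at `0`.
-/

theorem ConvexOn.exists_le_add_mul_sub_of_mem_interior {S : Set ℝ} {f : ℝ → ℝ}
    (hf : ConvexOn ℝ S f) {x : ℝ} (hx : x ∈ interior S) :
    ∃ D, ∀ y ∈ S, f x + D * (y - x) ≤ f y := by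
  refine ⟨derivWithin f (Ioi x) x, fun y hy => ?_⟩
  rcases lt_trichotomy x y with hxy | rfl | hyx
  · have h := hf.rightDeriv_le_slope_of_mem_interior hx hy hxy
    rw [slope_def_field, le_div_iff₀ (sub_pos.2 hxy)] at h
    linarith
  · simp
  · have h := (hf.slope_le_leftDeriv_of_mem_interior hy hx hyx).trans
      (hf.leftDeriv_le_rightDeriv_of_mem_interior hx)
    rw [slope_def_field, div_le_iff₀ (sub_pos.2 hyx)] at h
    linarith

theorem ConcaveOn.exists_le_add_mul_sub_of_mem_interior {S : Set ℝ} {f : ℝ → ℝ}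
    (hf : ConcaveOn ℝ S f) {x : ℝ} (hx : x ∈ interior S) :
    ∃ D, ∀ y ∈ S, f y ≤ f x + D * (y - x) := by
  obtain ⟨D, hD⟩ := hf.neg.exists_le_add_mul_sub_of_mem_interior hx
  exact ⟨-D, fun y hy => by have := hD y hy; simp only [Pi.neg_apply] at this; linarith⟩

theorem ConcaveOn.tsum_mul_le_of_hasSum {f : ℝ → ℝ} (hf : ConcaveOn ℝ (Ici 0) f)
    (hf0 : ∀ k : ℕ, 0 ≤ f k) {a : ℕ → ℝ} {lam : ℝ} (ha : ∀ k, 0 ≤ a k) (ha1 : HasSum a 1)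
    (hlam : HasSum (fun k : ℕ => (k : ℝ) * a k) lam) :
    ∑' k, a k * f k ≤ f lam := by
  have hka : ∀ k : ℕ, 0 ≤ (k : ℝ) * a k := fun k => mul_nonneg k.cast_nonneg (ha k)
  rcases (hlam.nonneg hka).eq_or_lt with rfl | hlam_pos
  · have ha0 : ∀ k, k ≠ 0 → a k = 0 := fun k hk => by
      simpa [hk] using congr_fun ((hasSum_zero_iff_of_nonneg hka).1 hlam) k
    have h_a0 : a 0 = 1 := (hasSum_single 0 ha0).unique ha1
    rw [tsum_eq_single 0 fun k hk => by rw [ha0 k hk, zero_mul], h_a0]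
    simp
  · obtain ⟨D, hD⟩ :=
      hf.exists_le_add_mul_sub_of_mem_interior (x := lam) (by simpa using hlam_pos)
    have hbound : ∀ k : ℕ, a k * f k ≤ a k * f lam + D * ((k : ℝ) * a k - lam * a k) := by
      intro k
      have := mul_le_mul_of_nonneg_left (hD k (mem_Ici.2 k.cast_nonneg)) (ha k)
      linarith
    have hsum :
        HasSum (fun k : ℕ => a k * f lam + D * ((k : ℝ) * a k - lam * a k)) (f lam) := by
      simpa using (ha1.mul_right (f lam)).add ((hlam.sub (ha1.mul_left lam)).mul_left D)
    exact (Summable.tsum_le_tsum hbound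
      (.of_nonneg_of_le (fun k => mul_nonneg (ha k) (hf0 k)) hbound hsum.summable)
      hsum.summable).trans_eq hsum.tsum_eq

section ParametricIntegral

variable {α : Type*} [MeasurableSpace α] {μ : Measure α} {s : Set ℝ} {F : ℝ → α → ℝ}

theorem monotoneOn_integral (hF : ∀ᵐ x ∂μ, MonotoneOn (F · x) s)
    (hint : ∀ N ∈ s, Integrable (F N) μ) :
    MonotoneOn (fun N => ∫ x, F N x ∂μ) s := fun _ hM _ hN hMN =>
  integral_mono_ae (hint _ hM) (hint _ hN) (hF.mono fun _ hx => hx hM hN hMN)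

theorem concaveOn_integral (hs : Convex ℝ s) (hF : ∀ᵐ x ∂μ, ConcaveOn ℝ s (F · x))
    (hint : ∀ N ∈ s, Integrable (F N) μ) :
    ConcaveOn ℝ s (fun N => ∫ x, F N x ∂μ) := by
  refine ⟨hs, fun M hM N hN a b ha hb hab => ?_⟩
  have hM' := (hint M hM).const_mul a
  have hN' := (hint N hN).const_mul b
  simp only [smul_eq_mul]
  calc a * ∫ x, F M x ∂μ + b * ∫ x, F N x ∂μ = ∫ x, (a * F M x + b * F N x) ∂μ := by
        rw [integral_add hM' hN', integral_const_mul, integral_const_mul]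
    _ ≤ ∫ x, F (a * M + b * N) x ∂μ :=
        integral_mono_ae (hM'.add hN') (hint _ (hs hM hN ha hb hab))
          (hF.mono fun _ hx => hx.2 hM hN ha hb hab)

end ParametricIntegral

theorem one_sub_rpow_one_sub_le {u N : ℝ} (hu0 : 0 ≤ u) (hu1 : u ≤ 1) (hN : 0 ≤ N) :
    1 - (1 - u) ^ N ≤ max N 1 * u := by
  rcases le_total N 1 with hN1 | hN1
  · have := rpow_le_rpow_of_exponent_ge' (sub_nonneg.2 hu1) (by linarith) hN hN1
    rw [rpow_one] at this
    rw [max_eq_right hN1]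
    linarith
  · have := one_add_mul_self_le_rpow_one_add (s := -u) (by linarith) hN1
    rw [← sub_eq_add_neg] at this
    rw [max_eq_left hN1]
    linarith

noncomputable def capacityIntegrand (ρ N x : ℝ) : ℝ :=
  (1 - (1 - exp (-x)) ^ N) / (1 + ρ * x)

section capacityIntegrand

variable {ρ N x : ℝ}

theorem one_sub_rpow_one_sub_exp_neg_nonneg (hN : 0 ≤ N) (hx : 0 ≤ x) :
    0 ≤ 1 - (1 - exp (-x)) ^ N :=
  sub_nonneg.2 <| rpow_le_one (sub_nonneg.2 (exp_le_one_iff.2 (neg_nonpos.2 hx)))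
    (sub_le_self _ (exp_pos _).le) hN

theorem capacityIntegrand_nonneg (hρ : 0 ≤ ρ) (hN : 0 ≤ N) (hx : 0 ≤ x) :
    0 ≤ capacityIntegrand ρ N x :=
  div_nonneg (one_sub_rpow_one_sub_exp_neg_nonneg hN hx) (by positivity)

theorem capacityIntegrand_le (hρ : 0 ≤ ρ) (hN : 0 ≤ N) (hx : 0 ≤ x) :
    capacityIntegrand ρ N x ≤ max N 1 * exp (-x) :=
  (div_le_self (one_sub_rpow_one_sub_exp_neg_nonneg hN hx) (by nlinarith)).trans <|
    one_sub_rpow_one_sub_le (exp_pos _).le (exp_le_one_iff.2 (neg_nonpos.2 hx)) hN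

theorem integrableOn_capacityIntegrand (hρ : 0 ≤ ρ) (hN : 0 ≤ N) :
    IntegrableOn (capacityIntegrand ρ N) (Ioi 0) := by
  refine ((integrableOn_exp_neg_Ioi 0).const_mul (max N 1)).mono' ?_ <|
    ae_restrict_of_forall_mem measurableSet_Ioi fun x hx => ?_
  · exact (Measurable.div (by fun_prop) (by fun_prop)).aestronglyMeasurable
  · rw [norm_of_nonneg (capacityIntegrand_nonneg hρ hN (hx.le))]
    exact capacityIntegrand_le hρ hN (hx.le)

theorem monotone_capacityIntegrand (hρ : 0 ≤ ρ) (hx : 0 < x) :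
    Monotone (capacityIntegrand ρ · x) := fun M N hMN => by
  have ht : 0 < 1 - exp (-x) := sub_pos.2 (exp_lt_one_iff.2 (neg_lt_zero.2 hx))
  have := rpow_le_rpow_of_exponent_ge ht (sub_le_self _ (exp_pos _).le) hMN
  exact div_le_div_of_nonneg_right (by linarith) (by positivity)

theorem concaveOn_capacityIntegrand (hρ : 0 ≤ ρ) (hx : 0 < x) :
    ConcaveOn ℝ univ (capacityIntegrand ρ · x) := by
  have ht : 0 < 1 - exp (-x) := sub_pos.2 (exp_lt_one_iff.2 (neg_lt_zero.2 hx))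
  have h := ((convexOn_rpow_left ht).neg.add_const 1).smul
    (inv_nonneg.2 (by positivity : 0 ≤ 1 + ρ * x))
  refine h.congr fun N _ => ?_
  simp only [capacityIntegrand, Pi.add_apply, Pi.neg_apply, smul_eq_mul]
  ring

end capacityIntegrand

theorem ergodicCapacity_zero (ρ : ℝ) : ergodicCapacity ρ 0 = 0 := by
  simp [ergodicCapacity]

theorem monotoneOn_ergodicCapacity {ρ : ℝ} (hρ : 0 ≤ ρ) :
    MonotoneOn (ergodicCapacity ρ) (Ici 0) :=
  fun _ hM _ hN hMN => mul_le_mul_of_nonneg_left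
    (monotoneOn_integral (ae_restrict_of_forall_mem measurableSet_Ioi fun _ hx =>
        (monotone_capacityIntegrand hρ hx).monotoneOn _)
      (fun _ hN => integrableOn_capacityIntegrand hρ hN) hM hN hMN) hρ

theorem concaveOn_ergodicCapacity {ρ : ℝ} (hρ : 0 ≤ ρ) :
    ConcaveOn ℝ (Ici 0) (ergodicCapacity ρ) :=
  (concaveOn_integral (convex_Ici 0) (ae_restrict_of_forall_mem measurableSet_Ioi fun _ hx =>
      (concaveOn_capacityIntegrand hρ hx).subset (subset_univ _) (convex_Ici 0))
    fun _ hN => integrableOn_capacityIntegrand hρ hN).smul hρ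

theorem ergodicCapacity_nonneg {ρ N : ℝ} (hρ : 0 ≤ ρ) (hN : 0 ≤ N) :
    0 ≤ ergodicCapacity ρ N :=
  ergodicCapacity_zero ρ ▸ monotoneOn_ergodicCapacity hρ self_mem_Ici hN hN

/-- `C̄(ρ,·)` is increasing and concave on `(0,∞)`; hence by Jensen's
inequality, for any ℕ-valued random number of users `𝒩` (pmf `a`) with mean
`λ`, `E[C̄(ρ,𝒩)] ≤ C̄(ρ,λ)`: randomizing the number of users reduces
ergodic capacity. -/
theorem ergodic_capacity_concave_jensen (ρ : ℝ) (hρ : 0 < ρ) :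
    MonotoneOn (ergodicCapacity ρ) (Set.Ioi 0) ∧
    ConcaveOn ℝ (Set.Ioi 0) (ergodicCapacity ρ) ∧
    ∀ (a : ℕ → ℝ) (lam : ℝ), (∀ k, 0 ≤ a k) → HasSum a 1 →
      HasSum (fun k : ℕ => (k : ℝ) * a k) lam →
      ∑' k : ℕ, a k * ergodicCapacity ρ k ≤ ergodicCapacity ρ lam :=
  ⟨(monotoneOn_ergodicCapacity hρ.le).mono Ioi_subset_Ici_self,
    (concaveOn_ergodicCapacity hρ.le).subset Ioi_subset_Ici_self (convex_Ioi 0),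
    fun _ _ ha ha1 hlam => (concaveOn_ergodicCapacity hρ.le).tsum_mul_le_of_hasSum
      (fun k => ergodicCapacity_nonneg hρ.le k.cast_nonneg) ha ha1 hlam⟩
end

section
/- The average BER P̄_e(ρ, N) = ∫_0^∞ α e^{-ηρ x} d(1-e^{-x})^N, viewed as a function of N > 0, is convex and decreasing; hence for any ℕ-valued random variable 𝒩 with mean λ, E[P̄_e(ρ, 𝒩)] ≥ P̄_e(ρ, λ). -/
/-!
Write `P̄_e(ρ, N) = ∫ w tᴺ` with the weight `w = αηρ e^{-ηρx} ≥ 0` and `t = 1 - e^{-x} ∈ (0, 1]`.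
Monotonicity and convexity are inherited pointwise from `N ↦ tᴺ = exp (N log t)`. Jensen's
inequality is proved pointwise too, from the tangent line of `exp` at `λ log t`, and then
integrated term by term, the series being dominated by `w`.
-/

open MeasureTheory

/-- The average BER `P̄_e(ρ,N) = ∫_0^∞ α e^{-ηρx} d(1-e^{-x})^N`, written
after integration by parts as `∫_0^∞ αηρ e^{-ηρx}(1-e^{-x})^N dx`. -/
noncomputable def avgBER (α η ρ N : ℝ) : ℝ :=
  ∫ x in Set.Ioi (0 : ℝ), α * η * ρ * Real.exp (-η * ρ * x) * (1 - Real.exp (-x)) ^ N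

open Real

theorem Real.exp_le_tsum_mul_exp {ι : Type*} {a y : ι → ℝ} {m : ℝ} (ha : ∀ i, 0 ≤ a i)
    (ha_sum : HasSum a 1) (hm : HasSum (fun i => a i * y i) m)
    (hs : Summable fun i => a i * exp (y i)) :
    exp m ≤ ∑' i, a i * exp (y i) := by
  have tangent : ∀ i, a i * (exp m * (1 + (y i - m))) ≤ a i * exp (y i) := fun i => by
    refine mul_le_mul_of_nonneg_left ?_ (ha i)
    calc exp m * (1 + (y i - m)) ≤ exp m * exp (y i - m) := by
          gcongr; linarith [add_one_le_exp (y i - m)]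
      _ = exp (y i) := by rw [← exp_add]; ring_nf
  have h_tangent_sum : HasSum (fun i => a i * (exp m * (1 + (y i - m)))) (exp m) := by
    have h := (ha_sum.mul_left (exp m * (1 - m))).add (hm.mul_left (exp m))
    rw [show exp m * (1 - m) * 1 + exp m * m = exp m by ring] at h
    exact h.congr_fun fun i => by ring
  exact hasSum_le tangent h_tangent_sum hs.hasSum

theorem Real.summable_mul_rpow {a : ℕ → ℝ} {b : ℝ} (hb : b ∈ Set.Ioc 0 1) (ha : ∀ k, 0 ≤ a k)
    (hs : Summable a) : Summable fun k : ℕ => a k * b ^ (k : ℝ) :=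
  hs.of_nonneg_of_le (fun k => mul_nonneg (ha k) (rpow_nonneg hb.1.le _)) fun k =>
    mul_le_of_le_one_right (ha k) (rpow_le_one hb.1.le hb.2 k.cast_nonneg)

theorem Real.tsum_mul_rpow_mem_Icc {a : ℕ → ℝ} {b : ℝ} (hb : b ∈ Set.Ioc 0 1)
    (ha : ∀ k, 0 ≤ a k) (ha_sum : HasSum a 1) :
    ∑' k : ℕ, a k * b ^ (k : ℝ) ∈ Set.Icc 0 1 := by
  refine ⟨tsum_nonneg fun k => mul_nonneg (ha k) (rpow_nonneg hb.1.le _), ?_⟩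
  rw [← ha_sum.tsum_eq]
  exact (summable_mul_rpow hb ha ha_sum.summable).tsum_le_tsum (fun k =>
    mul_le_of_le_one_right (ha k) (rpow_le_one hb.1.le hb.2 k.cast_nonneg)) ha_sum.summable

theorem Real.rpow_le_tsum_mul_rpow {a : ℕ → ℝ} {lam b : ℝ} (hb : b ∈ Set.Ioc 0 1)
    (ha : ∀ k, 0 ≤ a k) (ha_sum : HasSum a 1) (hlam : HasSum (fun k : ℕ => (k : ℝ) * a k) lam) :
    b ^ lam ≤ ∑' k : ℕ, a k * b ^ (k : ℝ) := by
  simp only [rpow_def_of_pos hb.1]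
  refine exp_le_tsum_mul_exp ha ha_sum ?_ ?_
  · exact (hlam.mul_left (log b)).congr_fun fun k => by ring
  · simpa only [← rpow_def_of_pos hb.1] using summable_mul_rpow hb ha ha_sum.summable

section IntegralMulRpow

variable {X : Type*} [MeasurableSpace X] {μ : Measure X} {w t : X → ℝ}

theorem integrable_mul_rpow (hw : Integrable w μ) (ht : AEMeasurable t μ)
    (ht_mem : ∀ᵐ x ∂μ, t x ∈ Set.Ioc 0 1) {N : ℝ} (hN : 0 ≤ N) :
    Integrable (fun x => w x * t x ^ N) μ := by
  refine hw.mul_bdd (ht.pow_const N).aestronglyMeasurable (c := 1) ?_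
  filter_upwards [ht_mem] with x hx
  rw [norm_of_nonneg (rpow_nonneg hx.1.le N)]
  exact rpow_le_one hx.1.le hx.2 hN

theorem antitoneOn_integral_mul_rpow (hw : Integrable w μ) (hw_nonneg : 0 ≤ᵐ[μ] w)
    (ht : AEMeasurable t μ) (ht_mem : ∀ᵐ x ∂μ, t x ∈ Set.Ioc 0 1) :
    AntitoneOn (fun N : ℝ => ∫ x, w x * t x ^ N ∂μ) (Set.Ici 0) := by
  intro M (hM : 0 ≤ M) N (hN : 0 ≤ N) hMN
  dsimp only
  refine integral_mono_ae (integrable_mul_rpow hw ht ht_mem hN)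
    (integrable_mul_rpow hw ht ht_mem hM) ?_
  filter_upwards [hw_nonneg, ht_mem] with x hwx htx
  exact mul_le_mul_of_nonneg_left (rpow_le_rpow_of_exponent_ge htx.1 htx.2 hMN) hwx

theorem convexOn_integral_mul_rpow (hw : Integrable w μ) (hw_nonneg : 0 ≤ᵐ[μ] w)
    (ht : AEMeasurable t μ) (ht_mem : ∀ᵐ x ∂μ, t x ∈ Set.Ioc 0 1) :
    ConvexOn ℝ (Set.Ici 0) (fun N : ℝ => ∫ x, w x * t x ^ N ∂μ) := by
  refine ⟨convex_Ici 0, fun M (hM : 0 ≤ M) N (hN : 0 ≤ N) p q hp hq hpq => ?_⟩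
  have hIM := (integrable_mul_rpow hw ht ht_mem hM).const_mul p
  have hIN := (integrable_mul_rpow hw ht ht_mem hN).const_mul q
  simp only [smul_eq_mul]
  rw [← integral_const_mul, ← integral_const_mul, ← integral_add hIM hIN]
  refine integral_mono_ae (integrable_mul_rpow hw ht ht_mem (by positivity)) (hIM.add hIN) ?_
  filter_upwards [hw_nonneg, ht_mem] with x hwx htx
  have h := (convexOn_rpow_left htx.1).2 (Set.mem_univ M) (Set.mem_univ N) hp hq hpq
  simp only [smul_eq_mul] at h
  calc w x * t x ^ (p * M + q * N) ≤ w x * (p * t x ^ M + q * t x ^ N) := by gcongr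
    _ = p * (w x * t x ^ M) + q * (w x * t x ^ N) := by ring

theorem integrable_mul_tsum_mul_rpow (hw : Integrable w μ) (ht : AEMeasurable t μ)
    (ht_mem : ∀ᵐ x ∂μ, t x ∈ Set.Ioc 0 1) {a : ℕ → ℝ} (ha : ∀ k, 0 ≤ a k)
    (ha_sum : HasSum a 1) :
    Integrable (fun x => w x * ∑' k : ℕ, a k * t x ^ (k : ℝ)) μ := by
  refine hw.mul_bdd (AEStronglyMeasurable.tsum fun k =>
    ((ht.pow_const _).const_mul (a k)).aestronglyMeasurable) (c := 1) ?_
  filter_upwards [ht_mem] with x hx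
  obtain ⟨h_nonneg, h_le_one⟩ := tsum_mul_rpow_mem_Icc hx ha ha_sum
  rwa [norm_of_nonneg h_nonneg]

theorem hasSum_integral_mul_rpow (hw : Integrable w μ) (ht : AEMeasurable t μ)
    (ht_mem : ∀ᵐ x ∂μ, t x ∈ Set.Ioc 0 1) {a : ℕ → ℝ} (ha : ∀ k, 0 ≤ a k)
    (ha_sum : HasSum a 1) :
    HasSum (fun k : ℕ => a k * ∫ x, w x * t x ^ (k : ℝ) ∂μ)
      (∫ x, w x * ∑' k : ℕ, a k * t x ^ (k : ℝ) ∂μ) := by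
  simp only [← integral_const_mul]
  refine hasSum_integral_of_dominated_convergence (fun k x => a k * ‖w x‖)
    (fun k => ((integrable_mul_rpow hw ht ht_mem k.cast_nonneg).const_mul (a k)).1)
    (fun k => ?_) (ae_of_all _ fun x => ha_sum.summable.mul_right _) ?_ ?_
  · filter_upwards [ht_mem] with x hx
    rw [norm_mul, norm_mul, norm_of_nonneg (ha k), norm_of_nonneg (rpow_nonneg hx.1.le _)]
    exact mul_le_mul_of_nonneg_left (mul_le_of_le_one_right (norm_nonneg _)
      (rpow_le_one hx.1.le hx.2 k.cast_nonneg)) (ha k)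
  · simpa only [tsum_mul_right, ha_sum.tsum_eq, one_mul] using hw.norm
  · filter_upwards [ht_mem] with x hx
    simpa only [mul_left_comm] using
      (summable_mul_rpow hx ha ha_sum.summable).hasSum.mul_left (w x)

theorem integral_mul_rpow_le_tsum (hw : Integrable w μ) (hw_nonneg : 0 ≤ᵐ[μ] w)
    (ht : AEMeasurable t μ) (ht_mem : ∀ᵐ x ∂μ, t x ∈ Set.Ioc 0 1)
    {a : ℕ → ℝ} {lam : ℝ} (ha : ∀ k, 0 ≤ a k) (ha_sum : HasSum a 1)
    (hlam : HasSum (fun k : ℕ => (k : ℝ) * a k) lam) :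
    ∫ x, w x * t x ^ lam ∂μ ≤ ∑' k : ℕ, a k * ∫ x, w x * t x ^ (k : ℝ) ∂μ := by
  rw [(hasSum_integral_mul_rpow hw ht ht_mem ha ha_sum).tsum_eq]
  have hlam_nonneg : 0 ≤ lam := hlam.nonneg fun k => mul_nonneg k.cast_nonneg (ha k)
  refine integral_mono_ae (integrable_mul_rpow hw ht ht_mem hlam_nonneg)
    (integrable_mul_tsum_mul_rpow hw ht ht_mem ha ha_sum) ?_
  filter_upwards [hw_nonneg, ht_mem] with x hwx htx
  exact mul_le_mul_of_nonneg_left (rpow_le_tsum_mul_rpow htx ha ha_sum hlam) hwx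

end IntegralMulRpow

theorem Real.one_sub_exp_neg_mem_Ioc {x : ℝ} (hx : 0 < x) : 1 - exp (-x) ∈ Set.Ioc 0 1 :=
  ⟨sub_pos.2 (exp_lt_one_iff.2 (neg_neg_of_pos hx)), sub_le_self _ (exp_pos _).le⟩

/-- `P̄_e(ρ,·)` is decreasing and convex on `(0,∞)`; hence by Jensen's
inequality, for any ℕ-valued random number of users `𝒩` (pmf `a`) with mean
`λ`, `E[P̄_e(ρ,𝒩)] ≥ P̄_e(ρ,λ)`. -/
theorem avg_ber_convex_jensen (α η ρ : ℝ) (hα : 0 < α) (hη : 0 < η) (hρ : 0 < ρ) :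
    AntitoneOn (avgBER α η ρ) (Set.Ioi 0) ∧
    ConvexOn ℝ (Set.Ioi 0) (avgBER α η ρ) ∧
    ∀ (a : ℕ → ℝ) (lam : ℝ), (∀ k, 0 ≤ a k) → HasSum a 1 →
      HasSum (fun k : ℕ => (k : ℝ) * a k) lam →
      avgBER α η ρ lam ≤ ∑' k : ℕ, a k * avgBER α η ρ k := by
  have hw : IntegrableOn (fun x => α * η * ρ * exp (-η * ρ * x)) (Set.Ioi 0) :=
    (integrableOn_exp_mul_Ioi (by nlinarith) 0).const_mul _
  have hw_nonneg : 0 ≤ᵐ[volume.restrict (Set.Ioi 0)] fun x => α * η * ρ * exp (-η * ρ * x) :=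
    ae_of_all _ fun x => by positivity
  have ht : AEMeasurable (fun x => 1 - exp (-x)) (volume.restrict (Set.Ioi 0)) := by fun_prop
  have ht_mem : ∀ᵐ x ∂volume.restrict (Set.Ioi 0), 1 - exp (-x) ∈ Set.Ioc 0 1 := by
    filter_upwards [ae_restrict_mem measurableSet_Ioi] with x hx
    exact one_sub_exp_neg_mem_Ioc hx
  exact ⟨(antitoneOn_integral_mul_rpow hw hw_nonneg ht ht_mem).mono Set.Ioi_subset_Ici_self,
    (convexOn_integral_mul_rpow hw hw_nonneg ht ht_mem).subset Set.Ioi_subset_Ici_self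
      (convex_Ioi 0),
    fun a lam ha ha_sum hlam => integral_mul_rpow_le_tsum hw hw_nonneg ht ht_mem ha ha_sum hlam⟩
end
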